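/- arXiv:1009.4371 — 5 statements merged into one kernel-verified Lean document; each statement's English description precedes it below -/
import Mathlib

section
/- Let C be an abelian category and D = D^b(C) its bounded derived category. A strictly full triangulated subcategory D_0 ⊂ D is dense (i.e. every object of D is a direct summand of an object of D_0) if and only if for every object E of C there exists F in D with E ⊕ F in D_0. -/
/-!
`D^b(C)` is modelled by a pretriangulated category `D` with a bounded t-structure `t`, the
objects of `C` being those of the heart `t.le 0 ⊓ t.ge 0`.

The objects `X` with `X ⊞ Y ∈ D₀` for some `Y` form a triangulated subcategory, because the direct
sum of two distinguished triangles is distinguished. A triangulated subcategory containing the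
heart contains its shifts, hence every object `X` with `t.le a X` and `t.ge b X`, by induction on
`a - b`: a truncation triangle splits `X` into a part of smaller length and a shifted heart object.
-/

open CategoryTheory Limits Pretriangulated Triangulated

universe v u

variable (D : Type u) [Category.{v} D] [Preadditive D] [HasZeroObject D]
  [HasShift D ℤ] [∀ n : ℤ, (shiftFunctor D n).Additive] [Pretriangulated D]

noncomputable def CategoryTheory.Limits.piBoolIsoBiprod {C : Type*} [Category C]
    [HasZeroMorphisms C] (f : Bool → C) [HasProduct f] [HasBinaryBiproduct (f false) (f true)] :
    ∏ᶜ f ≅ f false ⊞ f true where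
  hom := biprod.lift (Pi.π f false) (Pi.π f true)
  inv := Pi.lift fun b ↦ Bool.rec biprod.fst biprod.snd b
  hom_inv_id := by
    apply Pi.hom_ext
    rintro (_ | _) <;> simp
  inv_hom_id := by ext <;> simp

namespace CategoryTheory.ObjectProperty

section

variable {C : Type*} [Category C] [HasZeroMorphisms C] [HasBinaryBiproducts C]

def directSummands (P : ObjectProperty C) : ObjectProperty C := fun X ↦ ∃ Y, P (X ⊞ Y)

instance (P : ObjectProperty C) [P.IsClosedUnderIsomorphisms] :
    P.directSummands.IsClosedUnderIsomorphisms where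
  of_iso e := fun ⟨Y, hY⟩ ↦ ⟨Y, P.prop_of_iso (biprod.mapIso e (Iso.refl Y)) hY⟩

end

section

variable {D} (P : ObjectProperty D) [P.IsClosedUnderIsomorphisms]

lemma prop_biprod_obj₂ [P.IsTriangulatedClosed₂] {T₁ T₂ : Triangle D}
    (hT₁ : T₁ ∈ distTriang D) (hT₂ : T₂ ∈ distTriang D)
    (h₁ : P (T₁.obj₁ ⊞ T₂.obj₁)) (h₃ : P (T₁.obj₃ ⊞ T₂.obj₃)) :
    P (T₁.obj₂ ⊞ T₂.obj₂) := by
  let T : Bool → Triangle D := fun b ↦ bif b then T₂ else T₁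
  have hT : productTriangle T ∈ distTriang D :=
    productTriangle_distinguished T (by rintro (_ | _) <;> assumption)
  refine P.prop_of_iso (piBoolIsoBiprod fun b ↦ (T b).obj₂)
    (P.ext_of_isTriangulatedClosed₂ _ hT ?_ ?_)
  · exact P.prop_of_iso (piBoolIsoBiprod fun b ↦ (T b).obj₁).symm h₁
  · exact P.prop_of_iso (piBoolIsoBiprod fun b ↦ (T b).obj₃).symm h₃

instance [P.IsTriangulated] : P.directSummands.IsTriangulated where
  exists_zero := by
    obtain ⟨Z, hZ, -⟩ := P.exists_prop_of_containsZero
    exact ⟨Z, hZ, Z, P.prop_of_isZero ((biprod_isZero_iff Z Z).2 ⟨hZ, hZ⟩)⟩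
  isStableUnderShiftBy a := ⟨fun X ⟨Y, hY⟩ ↦ by
    have : PreservesBinaryBiproducts (shiftFunctor D a) :=
      preservesBinaryBiproducts_of_preservesBiproducts _
    exact ⟨Y⟦a⟧, P.prop_of_iso ((shiftFunctor D a).mapBiprod X Y) (P.le_shift a _ hY)⟩⟩
  toIsTriangulatedClosed₂ := .mk' fun T hT ⟨F₁, h₁⟩ ⟨F₃, h₃⟩ ↦
    ⟨F₁ ⊞ F₃, P.prop_biprod_obj₂ hT (binaryBiproductTriangle_distinguished F₁ F₃) h₁ h₃⟩

end

end CategoryTheory.ObjectProperty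

namespace CategoryTheory.Triangulated.TStructure

section

variable {D} (t : TStructure D)

lemma exists_distTriang_le_ge {X : D} {a b : ℤ} (hab : b ≤ a + 1) (hle : t.le (a + 1) X)
    (hge : t.ge b X) :
    ∃ (A B : D) (f : A ⟶ X) (g : X ⟶ B) (h : B ⟶ A⟦(1 : ℤ)⟧), Triangle.mk f g h ∈ distTriang D ∧
      t.le a A ∧ t.ge b A ∧ t.le (a + 1) B ∧ t.ge (a + 1) B := by
  obtain ⟨A, B, hA, hB, f, g, h, hT⟩ := t.exists_triangle X a (a + 1) rfl
  refine ⟨A, B, f, g, h, hT, hA, ?_, ?_, hB⟩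
  · refine (t.isGE₂ _ (inv_rot_of_distTriang _ hT) b ⟨?_⟩ ⟨hge⟩).ge
    exact t.ge_antitone (by omega) _ (t.ge_shift (a + 1) (-1) (a + 2) (by omega) B hB)
  · refine (t.isLE₂ _ (rot_of_distTriang _ hT) (a + 1) ⟨hle⟩ ⟨?_⟩).le
    exact t.le_monotone (by omega) _ (t.le_shift a 1 (a - 1) (by omega) A hA)

variable (Q : ObjectProperty D) [Q.IsTriangulated] [Q.IsClosedUnderIsomorphisms]

lemma prop_of_le_of_ge_same (hQ : t.heart ≤ Q) {n : ℤ} {X : D} (hle : t.le n X)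
    (hge : t.ge n X) : Q X :=
  (Q.prop_shift_iff_of_isStableUnderShift X n).1 <|
    hQ _ ⟨t.le_shift n n 0 (add_zero n) X hle, t.ge_shift n n 0 (add_zero n) X hge⟩

lemma prop_of_le_of_ge (hQ : t.heart ≤ Q) {a b : ℤ} {X : D} (hle : t.le a X)
    (hge : t.ge b X) : Q X := by
  suffices ∀ a, b ≤ a → ∀ X, t.le a X → t.ge b X → Q X from
    this (max a b) (le_max_right a b) X (t.le_monotone (le_max_left a b) X hle) hge
  intro a hab
  induction a, hab using Int.leInduction with
  | base => exact fun X ↦ t.prop_of_le_of_ge_same Q hQ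
  | succ a hab ih =>
    intro X hle hge
    obtain ⟨A, B, f, g, h, hT, hA₁, hA₂, hB₁, hB₂⟩ :=
      t.exists_distTriang_le_ge (by omega) hle hge
    exact Q.ext_of_isTriangulatedClosed₂ _ hT (ih A hA₁ hA₂)
      (t.prop_of_le_of_ge_same Q hQ hB₁ hB₂)

end

end CategoryTheory.Triangulated.TStructure

theorem stmt3 (t : TStructure D)
    (hbounded : ∀ X : D, ∃ n : ℕ, t.le n X ∧ t.ge (-(n : ℤ)) X)
    (D₀ : ObjectProperty D) [D₀.IsTriangulated] [D₀.IsClosedUnderIsomorphisms] :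
    (∀ E : D, ∃ F : D, D₀ (E ⊞ F)) ↔
      (∀ E : D, t.le 0 E → t.ge 0 E → ∃ F : D, D₀ (E ⊞ F)) := by
  refine ⟨fun hdense E _ _ ↦ hdense E, fun hheart X ↦ ?_⟩
  obtain ⟨n, hle, hge⟩ := hbounded X
  exact t.prop_of_le_of_ge D₀.directSummands (fun E hE ↦ hheart E hE.1 hE.2) hle hge
end

section
/- (Thomason's classification) Let D be an essentially small triangulated category with Grothendieck group K(D). The assignment sending a strictly full dense triangulated subcategory D_0 ⊂ D to the image of K(D_0) → K(D) is a bijection between the set of strictly full dense triangulated subcategories of D and the set of subgroups of K(D); the inverse sends a subgroup H ⊂ K(D) to the full subcategory D_H of objects E with class [E] ∈ H. -/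
/-!
STATEMENT 5 (Thomason): For an essentially small triangulated category D, sending a
strictly full dense triangulated subcategory D₀ to the image of K(D₀) → K(D) is a
bijection onto the set of subgroups of K(D); the inverse sends a subgroup H to the
full subcategory of objects E with [E] ∈ H.
-/

open CategoryTheory Limits Pretriangulated

universe v u

variable (C : Type u) [Category.{v} C] [Preadditive C] [HasZeroObject C]
  [HasShift C ℤ] [∀ n : ℤ, (shiftFunctor C n).Additive] [Pretriangulated C]

namespace Triangulated

/-- Mathlib's former `Triangulated.Subcategory` (removed since), with its old definition. -/
structure Subcategory where
  P : C → Prop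
  zero' : ∃ (Z : C) (_ : IsZero Z), P Z
  shift (X : C) (n : ℤ) : P X → P (X⟦n⟧)
  ext₂' (T : Triangle C) (_ : T ∈ distTriang C) : P T.obj₁ → P T.obj₃ →
    ObjectProperty.isoClosure P T.obj₂

end Triangulated

/-- The subgroup of relations defining the Grothendieck group of a triangulated
category: `[B] = [A] + [C]` for every distinguished triangle `A → B → C`. -/
def K0Relations : AddSubgroup (FreeAbelianGroup C) :=
  AddSubgroup.closure {x | ∃ T : Triangle C, (T ∈ distTriang C) ∧
    x = FreeAbelianGroup.of T.obj₂ - FreeAbelianGroup.of T.obj₁ - FreeAbelianGroup.of T.obj₃}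

/-- The Grothendieck group `K(D)` of a triangulated category. -/
def K0 : Type u := FreeAbelianGroup C ⧸ K0Relations C

instance : AddCommGroup (K0 C) :=
  inferInstanceAs (AddCommGroup (FreeAbelianGroup C ⧸ K0Relations C))

/-- The class `[X]` of an object in the Grothendieck group. -/
def K0.cls (X : C) : K0 C := QuotientAddGroup.mk' (K0Relations C) (FreeAbelianGroup.of X)

/-- Relations for the Grothendieck group of a (strictly full) triangulated subcategory
`S`: distinguished triangles of `D` with all three vertices in `S`. -/
def K0SubRelations (S : Triangulated.Subcategory C) :
    AddSubgroup (FreeAbelianGroup {X : C // S.P X}) :=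
  AddSubgroup.closure {x | ∃ (T : Triangle C) (_ : T ∈ distTriang C)
    (h₁ : S.P T.obj₁) (h₂ : S.P T.obj₂) (h₃ : S.P T.obj₃),
    x = FreeAbelianGroup.of ⟨T.obj₂, h₂⟩ - FreeAbelianGroup.of ⟨T.obj₁, h₁⟩ -
      FreeAbelianGroup.of ⟨T.obj₃, h₃⟩}

/-- The Grothendieck group `K(D₀)` of a (strictly full) triangulated subcategory. -/
def K0Sub (S : Triangulated.Subcategory C) : Type u :=
  FreeAbelianGroup {X : C // S.P X} ⧸ K0SubRelations C S

instance (S : Triangulated.Subcategory C) : AddCommGroup (K0Sub C S) :=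
  inferInstanceAs (AddCommGroup (FreeAbelianGroup {X : C // S.P X} ⧸ K0SubRelations C S))

/-- The natural map `K(D₀) → K(D)` on Grothendieck groups induced by the inclusion of a
triangulated subcategory. -/
def K0.ofSub (S : Triangulated.Subcategory C) : K0Sub C S →+ K0 C :=
  QuotientAddGroup.lift _ (FreeAbelianGroup.lift fun X : {X : C // S.P X} => K0.cls C X.1)
    (by
      intro x hx
      have hle : K0SubRelations C S ≤
          (FreeAbelianGroup.lift fun X : {X : C // S.P X} => K0.cls C X.1).ker := by
        rw [K0SubRelations, AddSubgroup.closure_le]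
        rintro y ⟨T, hT, h₁, h₂, h₃, rfl⟩
        simp only [SetLike.mem_coe, AddMonoidHom.mem_ker, map_sub,
          FreeAbelianGroup.lift_apply_of]
        show K0.cls C T.obj₂ - K0.cls C T.obj₁ - K0.cls C T.obj₃ = 0
        simp only [K0.cls, ← map_sub, QuotientAddGroup.mk'_apply]
        exact (QuotientAddGroup.eq_zero_iff _).2
          (AddSubgroup.subset_closure ⟨T, hT, rfl⟩)
      exact hle hx)

/-!
Every element of `K(D)` is a class `[X]`: sums are realised by `⊞` and negatives by `⟦1⟧`.
Hence the image of `K(D₀)` is `{[W] | W ∈ D₀}`, and for a subgroup `H` the subcategory `D_H`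
is triangulated, strictly full and dense (`[X ⊞ X⟦1⟧] = 0`) with image `H`.
The content is that `[X] ∈ image K(D₀)` forces `X ∈ D₀`. Call `X`, `Y` stably isomorphic
if `X ⊞ U ≅ Y ⊞ V` with `U, V ∈ D₀`. By density a distinguished triangle `A → B → C` gives
`B ∼ A ⊞ C`: add to it the split triangle `A' → A' ⊞ C' → C'` with `A ⊞ A'`, `C ⊞ C' ∈ D₀`.
Applied to `X → 0 → X⟦1⟧` this makes the classes an abelian group under `⊞`, with
`-X = X⟦1⟧`, and `X ↦ [X]` factors through `K(D)`. Finally `X ∼ 0` exactly when `X ∈ D₀`.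
-/

open ZeroObject

namespace CategoryTheory.Limits

noncomputable section

variable {𝒜 : Type*} [Category 𝒜] [HasZeroMorphisms 𝒜] [HasBinaryBiproducts 𝒜]

def biprod.leftComm (X Y Z : 𝒜) : X ⊞ (Y ⊞ Z) ≅ Y ⊞ (X ⊞ Z) :=
  (biprod.associator X Y Z).symm ≪≫ biprod.mapIso (biprod.braiding X Y) (Iso.refl Z) ≪≫
    biprod.associator Y X Z

def biprod.rightComm (X Y Z : 𝒜) : (X ⊞ Y) ⊞ Z ≅ (X ⊞ Z) ⊞ Y :=
  biprod.associator X Y Z ≪≫ biprod.mapIso (Iso.refl X) (biprod.braiding Y Z) ≪≫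
    (biprod.associator X Z Y).symm

def biprod.exchange (W X Y Z : 𝒜) : (W ⊞ X) ⊞ (Y ⊞ Z) ≅ (W ⊞ Y) ⊞ (X ⊞ Z) :=
  (biprod.associator (W ⊞ X) Y Z).symm ≪≫ biprod.mapIso (biprod.rightComm W X Y) (Iso.refl Z) ≪≫
    biprod.associator (W ⊞ Y) X Z

def piBoolIsoBiprod_s5 (G : Bool → 𝒜) [HasProduct G] : ∏ᶜ G ≅ G true ⊞ G false where
  hom := biprod.lift (Pi.π G true) (Pi.π G false)
  inv := Pi.lift fun b => Bool.rec biprod.snd biprod.fst b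
  hom_inv_id := by ext (_ | _) <;> simp
  inv_hom_id := by ext <;> simp

end

end CategoryTheory.Limits

namespace CategoryTheory.Pretriangulated

variable {C}

lemma exists_distTriang_biprod (T₁ T₂ : Triangle C) (h₁ : T₁ ∈ distTriang C)
    (h₂ : T₂ ∈ distTriang C) :
    ∃ T ∈ distTriang C, Nonempty (T.obj₁ ≅ T₁.obj₁ ⊞ T₂.obj₁) ∧
      Nonempty (T.obj₂ ≅ T₁.obj₂ ⊞ T₂.obj₂) ∧ Nonempty (T.obj₃ ≅ T₁.obj₃ ⊞ T₂.obj₃) := by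
  let T : Bool → Triangle C := fun b => Bool.rec T₂ T₁ b
  have hT : ∀ b, T b ∈ distTriang C := by rintro (_ | _) <;> assumption
  exact ⟨productTriangle T, productTriangle_distinguished T hT,
    ⟨piBoolIsoBiprod_s5 fun b => (T b).obj₁⟩, ⟨piBoolIsoBiprod_s5 fun b => (T b).obj₂⟩,
    ⟨piBoolIsoBiprod_s5 fun b => (T b).obj₃⟩⟩

end CategoryTheory.Pretriangulated

namespace CategoryTheory.ObjectProperty

variable {C} (P : ObjectProperty C)

/-- Density in Thomason's sense. -/
class IsSummandDense : Prop where
  exists_prop_biprod (X : C) : ∃ Y, P (X ⊞ Y)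

def StablyIso (X Y : C) : Prop :=
  ∃ U V, P U ∧ P V ∧ Nonempty (X ⊞ U ≅ Y ⊞ V)

namespace StablyIso

variable {P}

lemma symm {X Y : C} (h : P.StablyIso X Y) : P.StablyIso Y X := by
  obtain ⟨U, V, hU, hV, ⟨e⟩⟩ := h
  exact ⟨V, U, hV, hU, ⟨e.symm⟩⟩

lemma shift [P.IsTriangulated] {X Y : C} (h : P.StablyIso X Y) (n : ℤ) :
    P.StablyIso (X⟦n⟧) (Y⟦n⟧) := by
  obtain ⟨U, V, hU, hV, ⟨e⟩⟩ := h
  refine ⟨U⟦n⟧, V⟦n⟧, P.le_shift n _ hU, P.le_shift n _ hV, ⟨?_⟩⟩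
  have := preservesBinaryBiproduct_of_preservesBiproduct (shiftFunctor C n) X U
  have := preservesBinaryBiproduct_of_preservesBiproduct (shiftFunctor C n) Y V
  exact ((shiftFunctor C n).mapBiprod X U).symm ≪≫ (shiftFunctor C n).mapIso e ≪≫
    (shiftFunctor C n).mapBiprod Y V

end StablyIso

variable [P.IsTriangulated] [P.IsClosedUnderIsomorphisms]

lemma prop_biprod_of_isTriangulated {X Y : C} (hX : P X) (hY : P Y) : P (X ⊞ Y) :=
  P.ext_of_isTriangulatedClosed₂ _ (binaryBiproductTriangle_distinguished X Y) hX hY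

lemma prop_of_prop_biprod {X U : C} (h : P (X ⊞ U)) (hU : P U) : P X :=
  P.ext_of_isTriangulatedClosed₁ _ (binaryBiproductTriangle_distinguished X U) h hU

lemma prop_obj₂_biprod_of_distTriang (T : Triangle C) (hT : T ∈ distTriang C) {A' C' : C}
    (h₁ : P (T.obj₁ ⊞ A')) (h₃ : P (T.obj₃ ⊞ C')) : P (T.obj₂ ⊞ (A' ⊞ C')) := by
  obtain ⟨T', hT', ⟨e₁⟩, ⟨e₂⟩, ⟨e₃⟩⟩ := exists_distTriang_biprod T _ hT
    (binaryBiproductTriangle_distinguished A' C')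
  exact P.prop_of_iso e₂ (P.ext_of_isTriangulatedClosed₂ T' hT'
    (P.prop_of_iso e₁.symm h₁) (P.prop_of_iso e₃.symm h₃))

namespace StablyIso

variable {P}

lemma of_iso {X Y : C} (e : X ≅ Y) : P.StablyIso X Y :=
  ⟨0, 0, P.prop_zero, P.prop_zero, ⟨biprod.mapIso e (Iso.refl 0)⟩⟩

lemma refl (X : C) : P.StablyIso X X := of_iso (Iso.refl X)

lemma trans {X Y Z : C} (h : P.StablyIso X Y) (h' : P.StablyIso Y Z) : P.StablyIso X Z := by
  obtain ⟨U, V, hU, hV, ⟨e⟩⟩ := h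
  obtain ⟨U', V', hU', hV', ⟨e'⟩⟩ := h'
  refine ⟨U ⊞ U', V' ⊞ V, P.prop_biprod_of_isTriangulated hU hU',
    P.prop_biprod_of_isTriangulated hV' hV, ⟨?_⟩⟩
  calc X ⊞ (U ⊞ U') ≅ (X ⊞ U) ⊞ U' := (biprod.associator _ _ _).symm
    _ ≅ (Y ⊞ V) ⊞ U' := biprod.mapIso e (Iso.refl _)
    _ ≅ (Y ⊞ U') ⊞ V := biprod.rightComm _ _ _
    _ ≅ (Z ⊞ V') ⊞ V := biprod.mapIso e' (Iso.refl _)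
    _ ≅ Z ⊞ (V' ⊞ V) := biprod.associator _ _ _

lemma biprod {X Y X' Y' : C} (h : P.StablyIso X Y) (h' : P.StablyIso X' Y') :
    P.StablyIso (X ⊞ X') (Y ⊞ Y') := by
  obtain ⟨U, V, hU, hV, ⟨e⟩⟩ := h
  obtain ⟨U', V', hU', hV', ⟨e'⟩⟩ := h'
  refine ⟨U ⊞ U', V ⊞ V', P.prop_biprod_of_isTriangulated hU hU',
    P.prop_biprod_of_isTriangulated hV hV', ⟨?_⟩⟩
  exact biprod.exchange _ _ _ _ ≪≫ biprod.mapIso e e' ≪≫ (biprod.exchange _ _ _ _).symm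

end StablyIso

lemma stablyIso_zero_iff (X : C) : P.StablyIso X 0 ↔ P X := by
  refine ⟨fun ⟨U, V, hU, hV, ⟨e⟩⟩ => ?_, fun hX => ⟨0, X, P.prop_zero, hX, ⟨biprod.braiding X 0⟩⟩⟩
  refine P.prop_of_prop_biprod (P.prop_of_iso e.symm ?_) hU
  exact P.prop_biprod_of_isTriangulated P.prop_zero hV

lemma stablyIso_of_distTriang [P.IsSummandDense] (T : Triangle C) (hT : T ∈ distTriang C) :
    P.StablyIso T.obj₂ (T.obj₁ ⊞ T.obj₃) := by
  obtain ⟨A', h₁⟩ := IsSummandDense.exists_prop_biprod (P := P) T.obj₁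
  obtain ⟨C', h₃⟩ := IsSummandDense.exists_prop_biprod (P := P) T.obj₃
  refine ⟨(T.obj₁ ⊞ T.obj₃) ⊞ (A' ⊞ C'), T.obj₂ ⊞ (A' ⊞ C'), ?_,
    P.prop_obj₂_biprod_of_distTriang T hT h₁ h₃, ⟨biprod.leftComm _ _ _⟩⟩
  exact P.prop_obj₂_biprod_of_distTriang _ (binaryBiproductTriangle_distinguished _ _) h₁ h₃

def stablyIsoSetoid : Setoid C :=
  ⟨P.StablyIso, ⟨StablyIso.refl, StablyIso.symm, StablyIso.trans⟩⟩

def StableGroup : Type u := _root_.Quotient P.stablyIsoSetoid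

def stableClass (X : C) : P.StableGroup := _root_.Quotient.mk P.stablyIsoSetoid X

noncomputable section

namespace StableGroup

instance : Zero P.StableGroup := ⟨P.stableClass 0⟩

instance : Add P.StableGroup :=
  ⟨_root_.Quotient.map₂ (· ⊞ ·) fun _ _ h _ _ h' => h.biprod h'⟩

instance : Neg P.StableGroup :=
  ⟨_root_.Quotient.map (·⟦(1 : ℤ)⟧) fun _ _ h => h.shift 1⟩

instance [P.IsSummandDense] : AddCommGroup P.StableGroup where
  add_assoc a b c := by
    induction a, b, c using _root_.Quotient.inductionOn₃
    exact _root_.Quotient.sound (.of_iso (biprod.associator _ _ _))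
  zero_add a := by
    induction a using _root_.Quotient.inductionOn
    exact _root_.Quotient.sound (.of_iso (isoZeroBiprod (isZero_zero C)).symm)
  add_zero a := by
    induction a using _root_.Quotient.inductionOn
    exact _root_.Quotient.sound (.of_iso (isoBiprodZero (isZero_zero C)).symm)
  add_comm a b := by
    induction a, b using _root_.Quotient.inductionOn₂
    exact _root_.Quotient.sound (.of_iso (biprod.braiding _ _))
  neg_add_cancel a := by
    induction a using _root_.Quotient.inductionOn with | h X => ?_
    exact _root_.Quotient.sound ((StablyIso.of_iso (biprod.braiding _ _)).trans
      (P.stablyIso_of_distTriang _ (rot_of_distTriang _ (contractible_distinguished X))).symm)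
  nsmul := nsmulRec
  zsmul := zsmulRec

end StableGroup

end

lemma stableClass_biprod (X Y : C) :
    P.stableClass (X ⊞ Y) = P.stableClass X + P.stableClass Y := rfl

lemma stableClass_eq_zero_iff (X : C) : P.stableClass X = 0 ↔ P X :=
  _root_.Quotient.eq.trans (P.stablyIso_zero_iff X)

end CategoryTheory.ObjectProperty

namespace Triangulated.Subcategory

variable {C}

lemma ext {S T : Triangulated.Subcategory C} (h : S.P = T.P) : S = T := by
  cases S
  cases T
  cases h
  rfl

instance (S : Triangulated.Subcategory C) : ObjectProperty.IsTriangulated S.P where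
  exists_zero := let ⟨Z, hZ, h⟩ := S.zero'; ⟨Z, hZ, h⟩
  isStableUnderShiftBy n := ⟨fun X h => S.shift X n h⟩
  ext₂' := S.ext₂'

abbrev ofIsTriangulated (P : ObjectProperty C) [P.IsTriangulated] :
    Triangulated.Subcategory C where
  P := P
  zero' := let ⟨Z, hZ, h⟩ := P.exists_prop_of_containsZero; ⟨Z, hZ, h⟩
  shift X n h := P.le_shift n X h
  ext₂' := P.ext_of_isTriangulatedClosed₂'

end Triangulated.Subcategory

namespace K0

variable {C}

lemma cls_eq_add_of_distTriang (T : Triangle C) (hT : T ∈ distTriang C) :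
    cls C T.obj₂ = cls C T.obj₁ + cls C T.obj₃ := by
  rw [← sub_eq_zero, ← sub_sub]
  exact (QuotientAddGroup.eq_zero_iff _).2 (AddSubgroup.subset_closure ⟨T, hT, rfl⟩)

lemma cls_zero : cls C (0 : C) = 0 :=
  left_eq_add.1 (cls_eq_add_of_distTriang _ (contractible_distinguished (0 : C)))

lemma cls_biprod (X Y : C) : cls C (X ⊞ Y) = cls C X + cls C Y :=
  cls_eq_add_of_distTriang _ (binaryBiproductTriangle_distinguished X Y)

lemma cls_congr {X Y : C} (e : X ≅ Y) : cls C X = cls C Y := by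
  have hT : Triangle.mk e.hom (0 : Y ⟶ 0) 0 ∈ distTriang C :=
    isomorphic_distinguished _ (contractible_distinguished X) _
      (Triangle.isoMk _ _ (Iso.refl _) e.symm (Iso.refl _)
        (e.hom_inv_id.trans (Category.comp_id _).symm) (zero_comp.trans comp_zero.symm)
        (zero_comp.trans comp_zero.symm))
  simpa [cls_zero] using (cls_eq_add_of_distTriang _ hT).symm

lemma cls_shift_one (X : C) : cls C (X⟦(1 : ℤ)⟧) = -cls C X := by
  have h := cls_eq_add_of_distTriang _ (rot_of_distTriang _ (contractible_distinguished X))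
  rw [show (contractibleTriangle X).rotate.obj₂ = 0 from rfl, cls_zero] at h
  exact eq_neg_of_add_eq_zero_right h.symm

lemma cls_shift (X : C) (n : ℤ) : cls C (X⟦n⟧) = n.negOnePow • cls C X := by
  induction n using Int.induction_on with
  | zero => simp [cls_congr ((shiftFunctorZero C ℤ).app X)]
  | succ n ih =>
    rw [cls_congr ((shiftFunctorAdd' C (n : ℤ) 1 (n + 1) rfl).app X), Functor.comp_obj,
      cls_shift_one, ih, Int.negOnePow_succ, Units.neg_smul]
  | pred n ih =>
    have h := cls_congr ((shiftFunctorAdd' C (-(n : ℤ) - 1) 1 (-(n : ℤ)) (by ring)).app X)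
    rw [Functor.comp_obj, cls_shift_one, ih] at h
    rw [← neg_neg (cls C _), ← h, Int.negOnePow_sub, Int.negOnePow_one, mul_neg, mul_one,
      Units.neg_smul]

lemma cls_surjective : Function.Surjective (cls C) := by
  intro g
  induction g using QuotientAddGroup.induction_on with | H x => ?_
  induction x using FreeAbelianGroup.induction_on with
  | zero => exact ⟨0, cls_zero⟩
  | of X => exact ⟨X, rfl⟩
  | neg x ih =>
    obtain ⟨X, hX⟩ := ih
    exact ⟨X⟦(1 : ℤ)⟧, by rw [cls_shift_one, hX]; rfl⟩
  | add x y hx hy =>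
    obtain ⟨X, hX⟩ := hx
    obtain ⟨Y, hY⟩ := hy
    exact ⟨X ⊞ Y, by rw [cls_biprod, hX, hY]; rfl⟩

section

variable (P : ObjectProperty C) [P.IsTriangulated] [P.IsClosedUnderIsomorphisms]

def classesOf : AddSubgroup (K0 C) where
  carrier := {g | ∃ W, P W ∧ cls C W = g}
  zero_mem' := ⟨0, P.prop_zero, cls_zero⟩
  add_mem' := by
    rintro _ _ ⟨X, hX, rfl⟩ ⟨Y, hY, rfl⟩
    exact ⟨X ⊞ Y, P.prop_biprod_of_isTriangulated hX hY, cls_biprod X Y⟩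
  neg_mem' := by
    rintro _ ⟨X, hX, rfl⟩
    exact ⟨X⟦(1 : ℤ)⟧, P.le_shift 1 X hX, cls_shift_one X⟩

variable [P.IsSummandDense]

noncomputable def toStableGroup : K0 C →+ P.StableGroup :=
  QuotientAddGroup.lift _ (FreeAbelianGroup.lift P.stableClass) <|
    (AddSubgroup.closure_le _).2 <| by
    rintro _ ⟨T, hT, rfl⟩
    simp only [SetLike.mem_coe, AddMonoidHom.mem_ker, map_sub, FreeAbelianGroup.lift_apply_of]
    rw [sub_sub, sub_eq_zero, ← P.stableClass_biprod]
    exact Quotient.sound (P.stablyIso_of_distTriang T hT)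

lemma toStableGroup_cls (X : C) : toStableGroup P (cls C X) = P.stableClass X :=
  FreeAbelianGroup.lift_apply_of _ X

lemma cls_mem_classesOf_iff (X : C) : cls C X ∈ classesOf P ↔ P X := by
  refine ⟨fun ⟨W, hW, h⟩ => ?_, fun hX => ⟨X, hX, rfl⟩⟩
  rw [← P.stableClass_eq_zero_iff] at hW ⊢
  rwa [← toStableGroup_cls, ← h, toStableGroup_cls]

end

lemma range_ofSub (S : Triangulated.Subcategory C)
    [ObjectProperty.IsClosedUnderIsomorphisms S.P] :
    (ofSub C S).range = classesOf S.P := by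
  refine le_antisymm ?_ fun _ ⟨W, hW, h⟩ =>
    ⟨QuotientAddGroup.mk (FreeAbelianGroup.of ⟨W, hW⟩), h⟩
  let f := (ofSub C S).comp (QuotientAddGroup.mk' (K0SubRelations C S))
  have hf (x : FreeAbelianGroup {X : C // S.P X}) : f x ∈ classesOf S.P := by
    induction x using FreeAbelianGroup.induction_on with
    | zero => exact (map_zero f).symm ▸ zero_mem _
    | of X => exact ⟨X.1, X.2, rfl⟩
    | neg x ih => exact (map_neg f _).symm ▸ neg_mem ih
    | add x y hx hy => exact (map_add f x y).symm ▸ add_mem hx hy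
  rintro _ ⟨x, rfl⟩
  obtain ⟨x, rfl⟩ := QuotientAddGroup.mk'_surjective _ x
  exact hf x

/-- The subcategory `D_H`. -/
def clsPreimage (H : AddSubgroup (K0 C)) : ObjectProperty C := fun X => cls C X ∈ H

variable (H : AddSubgroup (K0 C))

instance : (clsPreimage H).IsClosedUnderIsomorphisms :=
  ⟨fun e hX => by rwa [clsPreimage, ← cls_congr e]⟩

instance : (clsPreimage H).IsTriangulated where
  exists_zero := ⟨0, isZero_zero C, by rw [clsPreimage, cls_zero]; exact H.zero_mem⟩
  isStableUnderShiftBy n := ⟨fun X hX => by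
    rw [ObjectProperty.shift, clsPreimage, cls_shift, Units.smul_def]
    exact H.zsmul_mem hX _⟩
  toIsTriangulatedClosed₂ := .mk' fun T hT h₁ h₃ => by
    rw [clsPreimage, cls_eq_add_of_distTriang T hT]
    exact H.add_mem h₁ h₃

instance : (clsPreimage H).IsSummandDense :=
  ⟨fun X => ⟨X⟦(1 : ℤ)⟧, by
    rw [clsPreimage, cls_biprod, cls_shift_one, add_neg_cancel]
    exact H.zero_mem⟩⟩

lemma classesOf_clsPreimage : classesOf (clsPreimage H) = H := by
  ext g
  obtain ⟨X, rfl⟩ := cls_surjective g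
  exact cls_mem_classesOf_iff _ X

end K0

abbrev DenseSubcategory := {S : Triangulated.Subcategory C //
  ObjectProperty.IsClosedUnderIsomorphisms S.P ∧ ∀ X : C, ∃ Y : C, S.P (X ⊞ Y)}

namespace DenseSubcategory

variable {C}

lemma prop_iff_cls_mem_range_ofSub (S : DenseSubcategory C) (X : C) :
    S.1.P X ↔ K0.cls C X ∈ (K0.ofSub C S.1).range := by
  obtain ⟨S, _, hS⟩ := S
  have : ObjectProperty.IsSummandDense S.P := ⟨hS⟩
  rw [K0.range_ofSub, K0.cls_mem_classesOf_iff]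

def ofSubgroup (H : AddSubgroup (K0 C)) : DenseSubcategory C :=
  ⟨.ofIsTriangulated (K0.clsPreimage H), inferInstance,
    ObjectProperty.IsSummandDense.exists_prop_biprod⟩

lemma range_ofSub_ofSubgroup (H : AddSubgroup (K0 C)) :
    (K0.ofSub C (ofSubgroup H).1).range = H :=
  (K0.range_ofSub (.ofIsTriangulated _)).trans (K0.classesOf_clsPreimage H)

end DenseSubcategory

theorem stmt5 :
    Function.Bijective
      (fun S : {S : Triangulated.Subcategory C //
          ObjectProperty.IsClosedUnderIsomorphisms S.P ∧ ∀ X : C, ∃ Y : C, S.P (X ⊞ Y)} =>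
        ((K0.ofSub C S.1).range : AddSubgroup (K0 C))) ∧
    ∀ (S : {S : Triangulated.Subcategory C //
        ObjectProperty.IsClosedUnderIsomorphisms S.P ∧ ∀ X : C, ∃ Y : C, S.P (X ⊞ Y)}) (X : C),
      S.1.P X ↔ K0.cls C X ∈ (K0.ofSub C S.1).range := by
  refine ⟨⟨fun S₁ S₂ h => ?_, fun H => ?_⟩, DenseSubcategory.prop_iff_cls_mem_range_ofSub⟩
  · dsimp only at h
    refine Subtype.ext (Triangulated.Subcategory.ext (funext fun X => propext ?_))
    rw [DenseSubcategory.prop_iff_cls_mem_range_ofSub S₁ X,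
      DenseSubcategory.prop_iff_cls_mem_range_ofSub S₂ X, h]
  · exact ⟨DenseSubcategory.ofSubgroup H, DenseSubcategory.range_ofSub_ofSubgroup H⟩
end

section
/- A triangulated category D that admits a bounded t-structure is Karoubian (idempotent complete), i.e. every idempotent endomorphism of an object of D splits. -/
/-!
If `X` lies in the (shifted) heart, `≤ a` and `≥ a`, an idempotent `e` of `X` splits through
`τ^{≥a} Z`, where `Z` is the cone of `𝟙 - e`; this object plays the role of the cokernel of
`𝟙 - e`.

Otherwise induct on the amplitude of `X`. The truncation triangle
`τ^{≤a} X → X → τ^{>a} X → (τ^{≤a} X)[1]` is functorial, so `e` induces idempotents on its ends,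
which split by induction, through `A₁` and `A₃` say. Completing `A₃ → τ^{>a} X → (τ^{≤a} X)[1] →
A₁[1]` to a distinguished triangle with middle term `Y` gives maps of triangles `φ : Y ⟶ X` and
`ψ : X ⟶ Y` with `φ ≫ ψ` invertible (five lemma), hence a split idempotent
`q = ψ ≫ (φ ≫ ψ)⁻¹ ≫ φ` inducing the same idempotents on the truncations as `e`. Since
`Hom((τ^{≤a} X)[1], τ^{>a} X) = 0`, the difference `q - e` factors as
`X → τ^{>a} X → τ^{≤a} X → X` and so squares to zero, and an idempotent that differs from a split
idempotent by a square-zero term splits as well.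
-/

open CategoryTheory Limits Pretriangulated Triangulated

universe v u

variable (C : Type u) [Category.{v} C] [Preadditive C] [HasZeroObject C]
  [HasShift C ℤ] [∀ n : ℤ, (shiftFunctor C n).Additive] [Pretriangulated C]

namespace CategoryTheory

section SplitIdempotent

variable {D : Type*} [Category D]

def IsSplitIdempotent {X : D} (e : X ⟶ X) : Prop :=
  ∃ (Y : D) (i : Y ⟶ X) (r : X ⟶ Y), i ≫ r = 𝟙 Y ∧ r ≫ i = e

open Preadditive in
lemma IsSplitIdempotent.of_sub_comp_sub_eq_zero [Preadditive D] {X : D} {e q : X ⟶ X}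
    (hq : IsSplitIdempotent q) (he : e ≫ e = e) (hz : (q - e) ≫ (q - e) = 0) :
    IsSplitIdempotent e := by
  obtain ⟨Y, i, r, hir, rfl⟩ := hq
  set z := r ≫ i - e
  have hq : r ≫ i = e + z := by simp [z]
  have hez : e ≫ z + z ≫ e = z := by
    have hqq : (e + z) ≫ (e + z) = e + z := by rw [← hq, Category.assoc, reassoc_of% hir]
    simp only [add_comp, comp_add, he, hz, add_zero] at hqq
    exact add_left_cancel (a := e) (by rw [← hqq]; abel)
  have heze : e ≫ z ≫ e = 0 := by
    have := congrArg (e ≫ ·) hez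
    simpa [comp_add, ← Category.assoc, he] using this
  have hzez : z ≫ e ≫ z = 0 := by
    simpa [add_comp, hz] using congrArg (· ≫ z) hez
  have hqe : e ≫ (r ≫ i) ≫ e = e := by rw [hq, add_comp, comp_add, heze, he, he, add_zero]
  refine ⟨Y, i ≫ e, e ≫ r, ?_, by simpa using hqe⟩
  set n := i ≫ z ≫ r
  have hn : i ≫ e ≫ r = 𝟙 Y - n := by
    rw [show e = r ≫ i - z by rw [hq]; abel]
    simp [sub_comp, comp_sub, hir, n]
  have hnn : n ≫ n = 0 := by
    calc n ≫ n = i ≫ (z ≫ (r ≫ i) ≫ z) ≫ r := by simp [n]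
      _ = 0 := by simp [hq, add_comp, comp_add, hzez, reassoc_of% hz]
  have hidem : (𝟙 Y - n) ≫ (𝟙 Y - n) = 𝟙 Y - n := by
    rw [← hn]
    simpa using congrArg (i ≫ · ≫ r) hqe
  -- `(𝟙 - n) ≫ (𝟙 - n) = 𝟙 - 2 • n`, so idempotency of `𝟙 - n` forces `n = 0`.
  have hn0 : n = 0 := by
    rw [← sub_eq_zero] at hidem
    simpa [sub_comp, comp_sub, hnn] using hidem
  simpa [hn0, reassoc_of% he] using hn

end SplitIdempotent

namespace Pretriangulated

variable {C}

lemma exists_eq_mor₂_comp_comp_mor₁ {T : Triangle C} (hT : T ∈ distTriang C)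
    (hT₁₃ : ∀ f : T.obj₁⟦(1 : ℤ)⟧ ⟶ T.obj₃, f = 0) {d : T.obj₂ ⟶ T.obj₂}
    (h₁ : T.mor₁ ≫ d = 0) (h₂ : d ≫ T.mor₂ = 0) :
    ∃ m : T.obj₃ ⟶ T.obj₁, d = T.mor₂ ≫ m ≫ T.mor₁ := by
  obtain ⟨g, rfl⟩ := Triangle.yoneda_exact₂ _ hT d h₁
  have hg : g ≫ T.mor₂ = 0 := by
    obtain ⟨k, hk⟩ := Triangle.yoneda_exact₃ _ hT (g ≫ T.mor₂) (by simpa using h₂)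
    rw [hk, hT₁₃ k, comp_zero]
  obtain ⟨m, rfl⟩ := Triangle.coyoneda_exact₂ _ hT g hg
  exact ⟨m, by simp⟩

open Preadditive in
lemma isSplitIdempotent_hom₂_of_retract {T T' : Triangle C} (hT : T ∈ distTriang C)
    (hT' : T' ∈ distTriang C) (hT₁₃ : ∀ f : T.obj₁⟦(1 : ℤ)⟧ ⟶ T.obj₃, f = 0)
    {E : T ⟶ T} (hE : E ≫ E = E) (Φ : T' ⟶ T) (Ψ : T ⟶ T')
    (h₁ : Φ.hom₁ ≫ Ψ.hom₁ = 𝟙 _) (h₃ : Φ.hom₃ ≫ Ψ.hom₃ = 𝟙 _)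
    (hE₁ : Ψ.hom₁ ≫ Φ.hom₁ = E.hom₁) (hE₃ : Ψ.hom₃ ≫ Φ.hom₃ = E.hom₃) :
    IsSplitIdempotent E.hom₂ := by
  have : IsIso (Φ.hom₂ ≫ Ψ.hom₂) := by
    have : IsIso (Φ ≫ Ψ).hom₁ := by rw [comp_hom₁, h₁]; infer_instance
    have : IsIso (Φ ≫ Ψ).hom₃ := by rw [comp_hom₃, h₃]; infer_instance
    exact isIso₂_of_isIso₁₃ (Φ ≫ Ψ) hT' hT' inferInstance inferInstance
  set s := Φ.hom₂ ≫ Ψ.hom₂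
  have hs₁ : T'.mor₁ ≫ inv s = T'.mor₁ := by
    rw [IsIso.comp_inv_eq, Φ.comm₁_assoc, Ψ.comm₁, reassoc_of% h₁]
  have hs₂ : inv s ≫ T'.mor₂ = T'.mor₂ := by
    rw [IsIso.inv_comp_eq, Category.assoc, ← Ψ.comm₂, ← Φ.comm₂_assoc, h₃, Category.comp_id]
  have hq : IsSplitIdempotent (Ψ.hom₂ ≫ inv s ≫ Φ.hom₂) :=
    ⟨T'.obj₂, Φ.hom₂, Ψ.hom₂ ≫ inv s,
      by rw [← Category.assoc]; exact IsIso.hom_inv_id s, by simp⟩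
  obtain ⟨m, hm⟩ := exists_eq_mor₂_comp_comp_mor₁ hT hT₁₃
    (d := Ψ.hom₂ ≫ inv s ≫ Φ.hom₂ - E.hom₂)
    (by rw [comp_sub, Ψ.comm₁_assoc, reassoc_of% hs₁, Φ.comm₁, reassoc_of% hE₁, E.comm₁,
      sub_self])
    (by rw [sub_comp, Category.assoc, Category.assoc, ← Φ.comm₂, reassoc_of% hs₂,
      ← Ψ.comm₂_assoc, hE₃, E.comm₂, sub_self])
  refine hq.of_sub_comp_sub_eq_zero (by rw [← comp_hom₂, hE]) ?_
  simp [hm, comp_distTriang_mor_zero₁₂_assoc _ hT]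

lemma isSplitIdempotent_hom₂_of_distTriang {T : Triangle C} (hT : T ∈ distTriang C)
    (hT₁₃ : ∀ f : T.obj₁⟦(1 : ℤ)⟧ ⟶ T.obj₃, f = 0) {E : T ⟶ T} (hE : E ≫ E = E)
    (h₁ : IsSplitIdempotent E.hom₁) (h₃ : IsSplitIdempotent E.hom₃) :
    IsSplitIdempotent E.hom₂ := by
  obtain ⟨A₁, i₁, r₁, hir₁, hri₁⟩ := h₁
  obtain ⟨A₃, i₃, r₃, hir₃, hri₃⟩ := h₃
  obtain ⟨Y, u, v, hT'⟩ := distinguished_cocone_triangle₂ (i₃ ≫ T.mor₃ ≫ r₁⟦(1 : ℤ)⟧')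
  have hΦ₃ : (i₃ ≫ T.mor₃ ≫ r₁⟦(1 : ℤ)⟧') ≫ i₁⟦(1 : ℤ)⟧' = i₃ ≫ T.mor₃ := by
    rw [Category.assoc, Category.assoc, ← Functor.map_comp, hri₁, E.comm₃, ← hri₃,
      Category.assoc, reassoc_of% hir₃]
  have hΨ₃ : T.mor₃ ≫ r₁⟦(1 : ℤ)⟧' = r₃ ≫ i₃ ≫ T.mor₃ ≫ r₁⟦(1 : ℤ)⟧' := by
    rw [reassoc_of% hri₃, ← E.comm₃_assoc, ← Functor.map_comp, ← hri₁, Category.assoc, hir₁,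
      Category.comp_id]
  obtain ⟨φ, hφ₁, hφ₂⟩ := complete_distinguished_triangle_morphism₂ _ _ hT' hT i₁ i₃ hΦ₃
  obtain ⟨ψ, hψ₁, hψ₂⟩ := complete_distinguished_triangle_morphism₂ _ _ hT hT' r₁ r₃ hΨ₃
  exact isSplitIdempotent_hom₂_of_retract hT hT' hT₁₃ hE
    (Triangle.homMk (Triangle.mk u v _) T i₁ φ i₃ hφ₁ hφ₂ hΦ₃)
    (Triangle.homMk T (Triangle.mk u v _) r₁ ψ r₃ hψ₁ hψ₂ hΨ₃) hir₁ hir₃ hri₁ hri₃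

end Pretriangulated

namespace Triangulated.TStructure

variable {C} (t : TStructure C)

lemma isGE_truncLT_obj_of_le (X : C) {a b : ℤ} (h : a ≤ b + 1) [t.IsGE X a] :
    t.IsGE ((t.truncLT b).obj X) a := by
  have := t.isGE_shift ((t.truncGE b).obj X) b (-1) (b + 1)
  exact t.isGE₂ _ (inv_rot_of_distTriang _ (t.triangleLTGE_distinguished b X)) a
    (t.isGE_of_ge (((t.truncGE b).obj X)⟦(-1 : ℤ)⟧) a (b + 1)) ‹_›

lemma isLE_truncGE_obj_of_le (X : C) {a b : ℤ} (h : a ≤ b + 2) [t.IsLE X b] :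
    t.IsLE ((t.truncGE a).obj X) b := by
  have := t.isLE_shift ((t.truncLT a).obj X) (a - 1) 1 (a - 2)
  exact t.isLE₂ _ (rot_of_distTriang _ (t.triangleLTGE_distinguished a X)) b ‹_›
    (t.isLE_of_le (((t.truncLT a).obj X)⟦(1 : ℤ)⟧) (a - 2) b)

open Preadditive in
lemma isSplitIdempotent_of_isLE_of_isGE {X : C} (a : ℤ) [t.IsLE X a] [t.IsGE X a]
    {e : X ⟶ X} (he : e ≫ e = e) : IsSplitIdempotent e := by
  obtain ⟨Z, p, q, hT⟩ := distinguished_cocone_triangle (𝟙 X - e)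
  have hp : e ≫ p = p := by
    have : (𝟙 X - e) ≫ p = 0 := comp_distTriang_mor_zero₁₂ _ hT
    rw [sub_comp, Category.id_comp, sub_eq_zero] at this
    exact this.symm
  obtain ⟨s, hs⟩ : ∃ s : Z ⟶ X, e = p ≫ s := Triangle.yoneda_exact₂ _ hT e
    (show (𝟙 X - e) ≫ e = 0 by rw [sub_comp, Category.id_comp, he, sub_self])
  let π := (t.truncGEπ a).app Z
  have hsp : s ≫ p ≫ π = π := by
    obtain ⟨g, hg⟩ : ∃ g : X⟦(1 : ℤ)⟧ ⟶ Z, 𝟙 Z - s ≫ p = q ≫ g :=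
      Triangle.yoneda_exact₃ _ hT _ (show p ≫ (𝟙 Z - s ≫ p) = 0 by
        rw [comp_sub, Category.comp_id, ← reassoc_of% hs, hp, sub_self])
    have : t.IsLE (X⟦(1 : ℤ)⟧) (a - 1) := t.isLE_shift X a 1 (a - 1)
    have hg₀ : g ≫ π = 0 := t.zero _ (a - 1) a
    have h := congrArg (· ≫ π) hg
    simp only [sub_comp, Category.id_comp, Category.assoc, hg₀, comp_zero, sub_eq_zero] at h
    exact h.symm
  refine ⟨(t.truncGE a).obj Z, t.descTruncGE s a, p ≫ π, ?_,
    by rw [Category.assoc, t.π_descTruncGE, hs]⟩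
  exact t.from_truncGE_obj_ext
    ((t.π_descTruncGE_assoc s a (p ≫ π)).trans (hsp.trans (Category.comp_id π).symm))

lemma isSplitIdempotent_of_isGE_of_isLE_add (n : ℕ) (a : ℤ) {X : C} [t.IsGE X a]
    [t.IsLE X (a + n)] {e : X ⟶ X} (he : e ≫ e = e) : IsSplitIdempotent e := by
  induction n generalizing a X with
  | zero =>
    have : t.IsLE X a := t.isLE_of_le X (a + (0 : ℕ)) a (by simp)
    exact t.isSplitIdempotent_of_isLE_of_isGE a he
  | succ n ih =>
    let T := (t.triangleLTGE (a + 1)).obj X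
    have : t.IsLE T.obj₁ a := t.isLE_truncLT_obj X (a + 1) a
    have : t.IsGE T.obj₁ a := t.isGE_truncLT_obj_of_le X (by lia)
    have : t.IsLE (T.obj₁⟦(1 : ℤ)⟧) (a - 1) := t.isLE_shift _ a 1 (a - 1)
    have : t.IsGE T.obj₃ (a + 1) := t.isGE_truncGE_obj X (a + 1) (a + 1)
    have : t.IsLE X (a + 1 + n) := t.isLE_of_le X (a + (n + 1 : ℕ)) _ (by push_cast; lia)
    have : t.IsLE T.obj₃ (a + 1 + n) := t.isLE_truncGE_obj_of_le X (by lia)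
    have hE : (t.triangleLTGE (a + 1)).map e ≫ (t.triangleLTGE (a + 1)).map e =
        (t.triangleLTGE (a + 1)).map e := by rw [← Functor.map_comp, he]
    exact isSplitIdempotent_hom₂_of_distTriang (t.triangleLTGE_distinguished (a + 1) X)
      (fun f => t.zero f (a - 1) (a + 1)) hE
      (t.isSplitIdempotent_of_isLE_of_isGE a (congrArg TriangleMorphism.hom₁ hE))
      (ih (a + 1) (congrArg TriangleMorphism.hom₃ hE))

end Triangulated.TStructure

end CategoryTheory

theorem stmt9 (t : TStructure C)
    (hbounded : ∀ X : C, ∃ n : ℕ, t.le n X ∧ t.ge (-(n : ℤ)) X) :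
    IsIdempotentComplete C := by
  refine ⟨fun X e he => ?_⟩
  obtain ⟨n, hle, hge⟩ := hbounded X
  have : t.IsGE X (-n) := ⟨hge⟩
  have : t.IsLE X n := ⟨hle⟩
  have : t.IsLE X (-n + (2 * n : ℕ)) := t.isLE_of_le X n _ (by push_cast; lia)
  exact t.isSplitIdempotent_of_isGE_of_isLE_add (2 * n) (-n) he
end

section
/- Let D be a Karoubian (idempotent complete) triangulated category and D_0 ⊂ D a dense strictly full triangulated subcategory. If D_0 is itself Karoubian, then D_0 = D. -/
/-!
Density makes every object `X` a retract of an object `X ⊞ Y` of `D₀`. The idempotent of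
`X ⊞ Y` cutting out `X` splits inside `D₀` because `D₀` is Karoubian, and any two retracts
realising the same idempotent are isomorphic; so `X` is isomorphic to an object of `D₀`.
-/

open CategoryTheory Limits Pretriangulated

universe v u

namespace CategoryTheory

section

variable {C : Type*} [Category* C]

def Retract.isoOfEqIdempotent {X Y Z : C} (h : Retract X Y) (h' : Retract Z Y)
    (e : h.r ≫ h.i = h'.r ≫ h'.i) : X ≅ Z where
  hom := h.i ≫ h'.r
  inv := h'.i ≫ h.r
  hom_inv_id := by
    rw [Category.assoc, ← Category.assoc h'.r, ← e]
    simp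
  inv_hom_id := by
    rw [Category.assoc, ← Category.assoc h.r, e]
    simp

lemma ObjectProperty.isStableUnderRetracts_of_isIdempotentComplete (P : ObjectProperty C)
    [P.IsClosedUnderIsomorphisms] [IsIdempotentComplete P.FullSubcategory] :
    P.IsStableUnderRetracts where
  of_retract {X Y} h hY := by
    obtain ⟨Z, i, r, hir, hri⟩ := IsIdempotentComplete.idempotents_split (C := P.FullSubcategory)
      ⟨Y, hY⟩ (ObjectProperty.homMk (h.r ≫ h.i)) (by ext; simp)
    let h' : Retract Z.obj Y := (Retract.mk i r hir).map P.ι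
    have e : h.r ≫ h.i = h'.r ≫ h'.i := (congrArg InducedCategory.Hom.hom hri).symm
    exact P.prop_of_iso (h.isoOfEqIdempotent h' e).symm Z.property

end

end CategoryTheory

variable (C : Type u) [Category.{v} C] [Preadditive C] [HasZeroObject C]
  [HasShift C ℤ] [∀ n : ℤ, (shiftFunctor C n).Additive] [Pretriangulated C]

theorem stmt10
    (D₀ : ObjectProperty C) [D₀.IsClosedUnderIsomorphisms]
    (hdense : ∀ X : C, ∃ Y : C, D₀ (X ⊞ Y))
    (hkaroubian : IsIdempotentComplete D₀.FullSubcategory) :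
    ∀ X : C, D₀ X := by
  have : D₀.IsStableUnderRetracts := D₀.isStableUnderRetracts_of_isIdempotentComplete
  intro X
  obtain ⟨Y, hXY⟩ := hdense X
  exact D₀.prop_of_retract (BinaryBiproduct.bicone X Y).retract_left hXY
end

section
/- Let D be an essentially small triangulated category, D_0 ⊂ D a dense strictly full triangulated subcategory, and E an object of D with [E] lying in the image of K(D_0) → K(D). Then E is an object of D_0. -/
/-!
STATEMENT 17 (Thomason, nontrivial direction): For an essentially small
triangulated category D, a dense strictly full triangulated subcategory D₀ ⊂ D, and an
object E whose class [E] lies in the image of K(D₀) → K(D), one has E ∈ D₀.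
-/

open CategoryTheory Limits Pretriangulated

universe v u

variable (C : Type u) [Category.{v} C] [Preadditive C] [HasZeroObject C]
  [HasShift C ℤ] [∀ n : ℤ, (shiftFunctor C n).Additive] [Pretriangulated C]

/-!
Call `X` and `Y` stably isomorphic modulo `D₀` if `X ⊞ A ≅ Y ⊞ B` for some `A, B ∈ D₀`.
The classes form a commutative monoid under `⊞` in which `[X] = 0` exactly when `X ∈ D₀`
(as `D₀` is closed under cones). Density makes every class invertible, and summing a distinguished
triangle `X₁ → X₂ → X₃` with `A → A ⊞ B → B`, where `X₁ ⊞ A, X₃ ⊞ B ∈ D₀`, shows that the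
classes are additive on triangles. So `[X] ↦ [X]` is a homomorphism from `K(D)` which kills
the image of `K(D₀)`; in particular `E` has class `0`, i.e. `E ∈ D₀`.
-/

namespace K0

variable {C} {A : Type*} [AddCommGroup A]

def lift (f : C → A) (hf : ∀ T ∈ distTriang C, f T.obj₂ = f T.obj₁ + f T.obj₃) : K0 C →+ A :=
  QuotientAddGroup.lift _ (FreeAbelianGroup.lift f) <| by
    rw [K0Relations, AddSubgroup.closure_le]
    rintro _ ⟨T, hT, rfl⟩
    simp [hf T hT]

@[simp]
lemma lift_cls (f : C → A) (hf : ∀ T ∈ distTriang C, f T.obj₂ = f T.obj₁ + f T.obj₃) (X : C) :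
    lift f hf (cls C X) = f X :=
  FreeAbelianGroup.lift_apply_of f X

lemma range_ofSub_le_ker (S : Triangulated.Subcategory C) (g : K0 C →+ A)
    (hg : ∀ X, S.P X → g (cls C X) = 0) : (ofSub C S).range ≤ g.ker := by
  have : g.comp (ofSub C S) = 0 :=
    QuotientAddGroup.addMonoidHom_ext _ <| FreeAbelianGroup.lift_ext _ _ fun X => hg X.1 X.2
  rintro _ ⟨w, rfl⟩
  exact DFunLike.congr_fun this w

end K0

namespace CategoryTheory.Limits

variable {C}

noncomputable def biprod.interchange (A B A' B' : C) :
    (A ⊞ B) ⊞ (A' ⊞ B') ≅ (A ⊞ A') ⊞ (B ⊞ B') :=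
  biprod.associator _ _ _ ≪≫
    biprod.mapIso (Iso.refl A)
      ((biprod.associator _ _ _).symm ≪≫
        biprod.mapIso (biprod.braiding B A') (Iso.refl B') ≪≫ biprod.associator _ _ _) ≪≫
    (biprod.associator _ _ _).symm

noncomputable def piWalkingPairIso (f : WalkingPair → C) : ∏ᶜ f ≅ f .left ⊞ f .right where
  hom := biprod.lift (Pi.π f .left) (Pi.π f .right)
  inv := Pi.lift fun
    | .left => biprod.fst
    | .right => biprod.snd
  hom_inv_id := by
    ext ⟨_ | _⟩ <;> simp
  inv_hom_id := by
    ext <;> simp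

end CategoryTheory.Limits

namespace Triangulated.Subcategory

variable {C} (S : Subcategory C) [ObjectProperty.IsClosedUnderIsomorphisms S.P]

open ZeroObject in
lemma zero_mem : S.P 0 := by
  obtain ⟨Z, hZ, h⟩ := S.zero'
  exact ObjectProperty.prop_of_iso S.P hZ.isoZero h

lemma ext₂ {T : Triangle C} (hT : T ∈ distTriang C) (h₁ : S.P T.obj₁) (h₃ : S.P T.obj₃) :
    S.P T.obj₂ := by
  obtain ⟨Y, hY, ⟨e⟩⟩ := S.ext₂' T hT h₁ h₃
  exact ObjectProperty.prop_of_iso S.P e.symm hY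

lemma ext₃ {T : Triangle C} (hT : T ∈ distTriang C) (h₁ : S.P T.obj₁) (h₂ : S.P T.obj₂) :
    S.P T.obj₃ :=
  S.ext₂ (rot_of_distTriang _ hT) h₂ (S.shift _ 1 h₁)

lemma biprod_mem {X Y : C} (hX : S.P X) (hY : S.P Y) : S.P (X ⊞ Y) :=
  S.ext₂ (binaryBiproductTriangle_distinguished X Y) hX hY

lemma mem_of_biprod_mem {X Y : C} (hY : S.P Y) (h : S.P (X ⊞ Y)) : S.P X :=
  S.ext₃ (binaryBiproductTriangle_distinguished Y X) hY
    (ObjectProperty.prop_of_iso S.P (biprod.braiding X Y) h)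

lemma ext₂_biprod {T₁ T₂ : Triangle C} (hT₁ : T₁ ∈ distTriang C) (hT₂ : T₂ ∈ distTriang C)
    (h₁ : S.P (T₁.obj₁ ⊞ T₂.obj₁)) (h₃ : S.P (T₁.obj₃ ⊞ T₂.obj₃)) :
    S.P (T₁.obj₂ ⊞ T₂.obj₂) := by
  let T : WalkingPair → Triangle C
    | .left => T₁
    | .right => T₂
  have hT : ∀ j, T j ∈ distTriang C
    | .left => hT₁
    | .right => hT₂
  have iso (i : Triangle C ⥤ C) : ∏ᶜ (fun j => i.obj (T j)) ≅ i.obj T₁ ⊞ i.obj T₂ :=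
    piWalkingPairIso _
  exact ObjectProperty.prop_of_iso S.P (iso Triangle.π₂)
    (S.ext₂ (productTriangle_distinguished T hT)
      (ObjectProperty.prop_of_iso S.P (iso Triangle.π₁).symm h₁)
      (ObjectProperty.prop_of_iso S.P (iso Triangle.π₃).symm h₃))

end Triangulated.Subcategory

namespace Triangulated.Subcategory

open ZeroObject

variable {C} (S : Subcategory C)

def StablyIso (X Y : C) : Prop :=
  ∃ a b : C, S.P a ∧ S.P b ∧ Nonempty (X ⊞ a ≅ Y ⊞ b)

variable {S}

lemma StablyIso.symm {X Y : C} : S.StablyIso X Y → S.StablyIso Y X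
  | ⟨a, b, ha, hb, ⟨e⟩⟩ => ⟨b, a, hb, ha, ⟨e.symm⟩⟩

variable [ObjectProperty.IsClosedUnderIsomorphisms S.P]

lemma StablyIso.of_iso {X Y : C} (e : X ≅ Y) : S.StablyIso X Y :=
  ⟨0, 0, S.zero_mem, S.zero_mem, ⟨biprod.mapIso e (Iso.refl 0)⟩⟩

lemma StablyIso.trans {X Y Z : C} :
    S.StablyIso X Y → S.StablyIso Y Z → S.StablyIso X Z
  | ⟨a, b, ha, hb, ⟨e⟩⟩, ⟨c, d, hc, hd, ⟨e'⟩⟩ =>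
    ⟨a ⊞ c, d ⊞ b, S.biprod_mem ha hc, S.biprod_mem hd hb, ⟨calc
      X ⊞ (a ⊞ c) ≅ (X ⊞ a) ⊞ c := (biprod.associator _ _ _).symm
      _ ≅ (Y ⊞ b) ⊞ c := biprod.mapIso e (Iso.refl c)
      _ ≅ (Y ⊞ c) ⊞ b := biprod.associator _ _ _ ≪≫
          biprod.mapIso (Iso.refl Y) (biprod.braiding b c) ≪≫ (biprod.associator _ _ _).symm
      _ ≅ (Z ⊞ d) ⊞ b := biprod.mapIso e' (Iso.refl b)
      _ ≅ Z ⊞ (d ⊞ b) := biprod.associator _ _ _⟩⟩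

lemma StablyIso.biprod {X X' Y Y' : C} :
    S.StablyIso X X' → S.StablyIso Y Y' → S.StablyIso (X ⊞ Y) (X' ⊞ Y')
  | ⟨a, b, ha, hb, ⟨e⟩⟩, ⟨c, d, hc, hd, ⟨e'⟩⟩ =>
    ⟨a ⊞ c, b ⊞ d, S.biprod_mem ha hc, S.biprod_mem hb hd,
      ⟨biprod.interchange X Y a c ≪≫ biprod.mapIso e e' ≪≫ (biprod.interchange X' Y' b d).symm⟩⟩

variable (S)

def stablyIsoSetoid : Setoid C :=
  ⟨S.StablyIso, ⟨fun X => .of_iso (Iso.refl X), .symm, .trans⟩⟩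

def StableClasses : Type u := Quotient S.stablyIsoSetoid

namespace StableClasses

variable {S}

def mk (X : C) : S.StableClasses := Quotient.mk _ X

lemma mk_eq_mk_of_iso {X Y : C} (e : X ≅ Y) : mk (S := S) X = mk Y :=
  Quotient.sound (.of_iso e)

noncomputable instance : Zero S.StableClasses := ⟨mk 0⟩

noncomputable instance : Add S.StableClasses :=
  ⟨Quotient.map₂ (· ⊞ ·) fun _ _ hX _ _ hY => hX.biprod hY⟩

lemma mk_biprod (X Y : C) : mk (S := S) (X ⊞ Y) = mk X + mk Y := rfl

noncomputable instance : AddCommMonoid S.StableClasses where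
  add_assoc := by
    rintro ⟨X⟩ ⟨Y⟩ ⟨Z⟩
    exact mk_eq_mk_of_iso (biprod.associator X Y Z)
  zero_add := by
    rintro ⟨X⟩
    exact mk_eq_mk_of_iso (isoZeroBiprod (isZero_zero C)).symm
  add_zero := by
    rintro ⟨X⟩
    exact mk_eq_mk_of_iso (isoBiprodZero (isZero_zero C)).symm
  add_comm := by
    rintro ⟨X⟩ ⟨Y⟩
    exact mk_eq_mk_of_iso (biprod.braiding X Y)
  nsmul := nsmulRec

lemma mk_eq_zero_iff {X : C} : mk (S := S) X = 0 ↔ S.P X := by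
  refine ⟨fun h => ?_, fun h => ?_⟩
  · obtain ⟨a, b, ha, hb, ⟨e⟩⟩ := Quotient.exact h
    exact S.mem_of_biprod_mem ha
      (ObjectProperty.prop_of_iso S.P (isoZeroBiprod (isZero_zero C) ≪≫ e.symm) hb)
  · exact Quotient.sound ⟨0, X, S.zero_mem, h,
      ⟨(isoBiprodZero (isZero_zero C)).symm ≪≫ isoZeroBiprod (isZero_zero C)⟩⟩

variable (hdense : ∀ X : C, ∃ Y : C, S.P (X ⊞ Y))
include hdense

lemma isAddUnit_mk (X : C) : IsAddUnit (mk (S := S) X) :=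
  let ⟨Y, hY⟩ := hdense X
  .of_add_eq_zero (mk Y) (mk_eq_zero_iff.2 hY)

lemma mk_obj₂ {T : Triangle C} (hT : T ∈ distTriang C) :
    mk (S := S) T.obj₂ = mk T.obj₁ + mk T.obj₃ := by
  obtain ⟨a, ha⟩ := hdense T.obj₁
  obtain ⟨c, hc⟩ := hdense T.obj₃
  have h₂ : mk (S := S) T.obj₂ + (mk a + mk c) = 0 :=
    mk_eq_zero_iff.2 (S.ext₂_biprod hT (binaryBiproductTriangle_distinguished a c) ha hc)
  have h₁₃ : mk (S := S) a + mk c + (mk T.obj₁ + mk T.obj₃) = 0 := by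
    rw [add_add_add_comm, add_comm (mk a), add_comm (mk c), ← mk_biprod, ← mk_biprod,
      mk_eq_zero_iff.2 ha, mk_eq_zero_iff.2 hc, add_zero]
  -- both sides are additive inverses of `mk a + mk c`
  exact left_neg_eq_right_neg h₂ h₁₃

end StableClasses

end Triangulated.Subcategory

open Triangulated.Subcategory.StableClasses in
theorem stmt17 (S : Triangulated.Subcategory C)
    [ObjectProperty.IsClosedUnderIsomorphisms S.P]
    (hdense : ∀ X : C, ∃ Y : C, S.P (X ⊞ Y)) (E : C)
    (hE : K0.cls C E ∈ (K0.ofSub C S).range) :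
    S.P E := by
  let φ : K0 C →+ AddUnits S.StableClasses :=
    K0.lift (fun X => (isAddUnit_mk hdense X).addUnit) fun _ hT =>
      AddUnits.ext (mk_obj₂ hdense hT)
  have φ_cls (X : C) : (φ (K0.cls C X) : S.StableClasses) = mk X := by simp [φ]
  have hφ : φ (K0.cls C E) = 0 :=
    K0.range_ofSub_le_ker S φ
      (fun X hX => AddUnits.ext ((φ_cls X).trans (mk_eq_zero_iff.2 hX))) hE
  exact mk_eq_zero_iff.1 ((φ_cls E).symm.trans (congrArg AddUnits.val hφ))
end
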